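/- arXiv:1904.04465 — 3 statements merged into one kernel-verified Lean document; each statement's English description precedes it below -/
import Mathlib

section
/- Let A = (a_{ij}) be a symmetric n×n matrix that is (λ,w)-scaled diagonally dominant with a_{ii} > 0, for λ ∈ (0,1) and positive weights w. Let G be the graph with edge (i,j) iff a_{ij} ≠ 0 and let N_i denote the neighbors of i. Suppose for each ordered pair (i,j) with j ∈ N_i we have a real α_{u→i} satisfying α_{u→i} ≥ −ρ (w_u/w_i)|a_{iu}| for some 0 ≤ ρ < λ⁻¹. Then for every i and j ∈ N_i, the quantity a_{i→j} := a_{ii} + ∑_{u ∈ N_i\{j}} α_{u→i} satisfies λ w_i a_{i→j} ≥ w_j |a_{ij}|; in particular a_{i→j} > 0. -/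
/-- Well-posedness induction step for quadratic message passing (Theorem 3, P3').
`N i` is the neighborhood `{u ≠ i : a_{iu} ≠ 0}`. If each incoming curvature satisfies
`α_{u→i} ≥ −ρ (w_u/w_i) |a_{iu}|` with `0 ≤ ρ < λ⁻¹`, then
`a_{i→j} = a_{ii} + ∑_{u ∈ N_i\{j}} α_{u→i}` satisfies `λ w_i a_{i→j} ≥ w_j |a_{ij}|`,
and in particular `a_{i→j} > 0`. -/
theorem stmt_5 {n : ℕ} (A : Matrix (Fin n) (Fin n) ℝ) (lam rho : ℝ) (w : Fin n → ℝ)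
    (hsymm : A.IsSymm) (hdiag : ∀ i, 0 < A i i)
    (hlam0 : 0 < lam) (hlam1 : lam < 1) (hrho0 : 0 ≤ rho) (hrho1 : rho < lam⁻¹)
    (hw : ∀ i, 0 < w i)
    (hdd : ∀ i, ∑ j ∈ Finset.univ.erase i, w j * |A i j| ≤ lam * w i * A i i)
    (N : Fin n → Finset (Fin n))
    (hN : ∀ i u, u ∈ N i ↔ u ≠ i ∧ A i u ≠ 0)
    (α : Fin n → Fin n → ℝ)  -- `α u i` is the curvature of the message from `u` to `i`
    (hα : ∀ i, ∀ u ∈ N i, -(rho * (w u / w i) * |A i u|) ≤ α u i) :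
    ∀ i, ∀ j ∈ N i,
      w j * |A i j| ≤ lam * w i * (A i i + ∑ u ∈ (N i).erase j, α u i) ∧
      0 < A i i + ∑ u ∈ (N i).erase j, α u i := by
  intro i j hj
  obtain ⟨hji, hAij⟩ := (hN i j).1 hj
  set T := ∑ u ∈ (N i).erase j, w u * |A i u| with hT
  have hsum1 : T + w j * |A i j| = ∑ u ∈ N i, w u * |A i u| :=
    Finset.sum_erase_add _ _ hj
  have hsum2 : ∑ u ∈ N i, w u * |A i u| = ∑ u ∈ Finset.univ.erase i, w u * |A i u| := by
    apply Finset.sum_subset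
    · intro u hu
      exact Finset.mem_erase.2 ⟨((hN i u).1 hu).1, Finset.mem_univ u⟩
    · intro u hu hnu
      have hune : u ≠ i := (Finset.mem_erase.1 hu).1
      have : A i u = 0 := by
        by_contra h
        exact hnu ((hN i u).2 ⟨hune, h⟩)
      simp [this]
  have hαsum : -(rho / w i * T) ≤ ∑ u ∈ (N i).erase j, α u i := by
    have h1 : ∑ u ∈ (N i).erase j, -(rho * (w u / w i) * |A i u|)
        ≤ ∑ u ∈ (N i).erase j, α u i :=
      Finset.sum_le_sum fun u hu => hα i u (Finset.mem_of_mem_erase hu)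
    refine le_trans (le_of_eq ?_) h1
    rw [hT, Finset.mul_sum, ← Finset.sum_neg_distrib]
    apply Finset.sum_congr rfl
    intro u _
    field_simp
  have hTnn : 0 ≤ T := Finset.sum_nonneg fun u _ =>
    mul_nonneg (hw u).le (abs_nonneg _)
  have haj : 0 < w j * |A i j| :=
    mul_pos (hw j) (abs_pos.2 hAij)
  have hjle : w j * |A i j| ≤ ∑ u ∈ Finset.univ.erase i, w u * |A i u| :=
    Finset.single_le_sum (fun u _ => mul_nonneg (hw u).le (abs_nonneg _))
      (Finset.mem_erase.2 ⟨hji, Finset.mem_univ j⟩)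
  have hS := hdd i
  have hlr : lam * rho < 1 := by
    calc lam * rho < lam * lam⁻¹ := by exact mul_lt_mul_of_pos_left hrho1 hlam0
    _ = 1 := mul_inv_cancel₀ (ne_of_gt hlam0)
  have hwi : (0:ℝ) < w i := hw i
  have key : w j * |A i j| ≤ lam * w i * (A i i + ∑ u ∈ (N i).erase j, α u i) := by
    have h2 : lam * w i * (-(rho / w i * T)) ≤ lam * w i * (∑ u ∈ (N i).erase j, α u i) :=
      mul_le_mul_of_nonneg_left hαsum (by positivity)
    have h3 : lam * w i * (-(rho / w i * T)) = -(lam * rho * T) := by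
      field_simp
    have hST : T + w j * |A i j| ≤ lam * w i * A i i := by
      rw [hsum1, hsum2]; exact hS
    have hTge : w j * |A i j| ≤ T + w j * |A i j| := le_add_of_nonneg_left hTnn
    nlinarith [mul_nonneg (mul_nonneg hlam0.le hrho0) hTnn,
      mul_le_mul_of_nonneg_left hTnn (mul_nonneg hlam0.le hrho0)]
  refine ⟨key, ?_⟩
  nlinarith [mul_pos hlam0 hwi]
end

section
/- With the notation of the envelope formula, let λ ∈ (0,1) and weights w_i, w_j > 0. If a := (∂²g/∂y²)(y*(x),x) > 0, c := |(∂²g/∂y∂x)(y*(x),x)|, h := (∂²g/∂x²)(y*(x),x) and λ w_i a ≥ w_j c, then 0 ≥ J''(x) − h ≥ −λ (w_i/w_j) c. -/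
/-- Inequality (16) of the paper. If `a = (∂²g/∂y²)(y*(x),x) > 0`,
`c = |(∂²g/∂y∂x)(y*(x),x)| ≥ 0`, `h = (∂²g/∂x²)(y*(x),x)`, `λ w_i a ≥ w_j c`, and (by the
envelope formula) `J''(x) = h − c²/a`, then `0 ≥ J''(x) − h ≥ −λ (w_i/w_j) c`. -/
theorem stmt_8 (a c h Jxx lam wi wj : ℝ) (ha : 0 < a) (hc : 0 ≤ c)
    (hlam0 : 0 < lam) (hlam1 : lam < 1) (hwi : 0 < wi) (hwj : 0 < wj)
    (hdom : wj * c ≤ lam * wi * a)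
    (hJ : Jxx = h - c ^ 2 / a) :
    Jxx - h ≤ 0 ∧ -(lam * (wi / wj) * c) ≤ Jxx - h := by
  subst hJ
  constructor
  · have : 0 ≤ c ^ 2 / a := div_nonneg (sq_nonneg c) ha.le
    linarith
  · have key : c ^ 2 / a ≤ lam * (wi / wj) * c := by
      rw [div_le_iff₀ ha]
      have h1 : c * (wj * c) ≤ c * (lam * wi * a) :=
        mul_le_mul_of_nonneg_left hdom hc
      have h2 : lam * (wi / wj) * c * a = (c * (lam * wi * a)) / wj := by
        field_simp
      rw [h2]
      rw [le_div_iff₀ hwj]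
      calc c ^ 2 * wj = c * (wj * c) := by ring
        _ ≤ c * (lam * wi * a) := h1
    linarith
end

section
/- Let λ ∈ (0,1), let R be an n×n matrix with ‖R‖_∞ ≤ λ, let D be a diagonal matrix with entries D_i > 0, and let h ∈ ℝⁿ be supported on a set S such that (R^s (D⁻¹h))_r = 0 for all s < t for a fixed index r. If z solves (I − R) z = D⁻¹ h, then |z_r| ≤ (λ^t/(1−λ)) · max_i |h_i|/D_i. -/
/-- Central estimate of the convergence proof. If `‖R‖_∞ ≤ λ < 1`
(row sums), `D_i > 0`, the first `t` powers of `R` applied to `D⁻¹h` vanish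
at index `r`, and `(I − R) z = D⁻¹ h`, then `|z_r| ≤ (λ^t/(1−λ)) max_i |h_i|/D_i`. -/
theorem stmt_14 {n : ℕ} (R : Matrix (Fin n) (Fin n) ℝ) (lam : ℝ)
    (D h z : Fin n → ℝ) (r : Fin n) (t : ℕ)
    (hlam0 : 0 < lam) (hlam1 : lam < 1)
    (hR : ∀ i, ∑ j, |R i j| ≤ lam)
    (hD : ∀ i, 0 < D i)
    (hvanish : ∀ s : ℕ, s < t → (R ^ s).mulVec (fun i => h i / D i) r = 0)
    (hz : (1 - R).mulVec z = fun i => h i / D i) :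
    |z r| ≤ lam ^ t / (1 - lam) * ⨆ i, |h i| / D i := by
  have hne : Nonempty (Fin n) := ⟨r⟩
  set v : Fin n → ℝ := fun i => h i / D i with hv
  set M : ℝ := ⨆ i, |h i| / D i with hMdef
  have hbdd : ∀ (f : Fin n → ℝ), BddAbove (Set.range f) :=
    fun f => (Set.finite_range f).bddAbove
  have hvM : ∀ i, |v i| ≤ M := by
    intro i
    have hvi : |v i| = |h i| / D i := by
      simp [hv, abs_div, abs_of_pos (hD i)]
    rw [hvi]
    rw [hMdef]; exact le_ciSup (f := fun i => |h i| / D i) (hbdd _) i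
  -- one multiplication step
  have step : ∀ (w : Fin n → ℝ) (C : ℝ), (∀ j, |w j| ≤ C) →
      ∀ i, |R.mulVec w i| ≤ lam * C := by
    intro w C hw i
    have hC0 : 0 ≤ C := (abs_nonneg _).trans (hw r)
    calc |R.mulVec w i| = |∑ j, R i j * w j| := rfl
      _ ≤ ∑ j, |R i j * w j| := Finset.abs_sum_le_sum_abs _ _
      _ ≤ ∑ j, |R i j| * C := by
          apply Finset.sum_le_sum; intro j _
          rw [abs_mul]; exact mul_le_mul_of_nonneg_left (hw j) (abs_nonneg _)
      _ = (∑ j, |R i j|) * C := by rw [Finset.sum_mul]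
      _ ≤ lam * C := mul_le_mul_of_nonneg_right (hR i) hC0
  have pow_step : ∀ (s : ℕ) (w : Fin n → ℝ) (C : ℝ), (∀ j, |w j| ≤ C) →
      ∀ i, |(R ^ s).mulVec w i| ≤ lam ^ s * C := by
    intro s
    induction s with
    | zero => intro w C hw i; simpa [Matrix.one_mulVec] using hw i
    | succ s ih =>
      intro w C hw i
      have hrw : (R ^ (s + 1)).mulVec w = (R ^ s).mulVec (R.mulVec w) := by
        rw [pow_succ, ← Matrix.mulVec_mulVec]
      rw [hrw]
      calc |(R ^ s).mulVec (R.mulVec w) i| ≤ lam ^ s * (lam * C) :=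
            ih (R.mulVec w) (lam * C) (step w C hw) i
        _ = lam ^ (s + 1) * C := by ring
  -- recursion z = R z + v
  have hzrec : ∀ i, z i = R.mulVec z i + v i := by
    intro i
    have := congrFun hz i
    rw [Matrix.sub_mulVec, Matrix.one_mulVec] at this
    simp only [Pi.sub_apply] at this
    linarith [this]
  -- bound on sup |z|
  set Z : ℝ := ⨆ i, |z i| with hZdef
  have hzZ : ∀ i, |z i| ≤ Z := fun i => hZdef ▸ le_ciSup (f := fun i => |z i|) (hbdd _) i
  have hZM : Z ≤ M / (1 - lam) := by
    have h1 : Z ≤ lam * Z + M := by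
      apply ciSup_le
      intro i
      calc |z i| = |R.mulVec z i + v i| := by rw [hzrec i]
        _ ≤ |R.mulVec z i| + |v i| := abs_add_le _ _
        _ ≤ lam * Z + M := add_le_add (step z Z hzZ i) (hvM i)
    rw [le_div_iff₀ (by linarith)]
    nlinarith
  -- z r = (R^t) z r
  have key : ∀ s, s ≤ t → z r = (R ^ s).mulVec z r := by
    intro s
    induction s with
    | zero => intro _; simp [Matrix.one_mulVec]
    | succ s ih =>
      intro hst
      have hs : s ≤ t := Nat.le_of_succ_le hst
      rw [ih hs]
      have hrec : (R ^ s).mulVec z r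
          = (R ^ (s + 1)).mulVec z r + (R ^ s).mulVec v r := by
        have : z = fun i => R.mulVec z i + v i := funext hzrec
        conv_lhs => rw [this]
        have : (fun i => R.mulVec z i + v i) = R.mulVec z + v := rfl
        rw [this, Matrix.mulVec_add, pow_succ, ← Matrix.mulVec_mulVec]
        simp
      rw [hrec, hvanish s (by omega), add_zero]
  have hz0 : 0 ≤ Z := (abs_nonneg _).trans (hzZ r)
  calc |z r| = |(R ^ t).mulVec z r| := by rw [key t le_rfl]
    _ ≤ lam ^ t * Z := pow_step t z Z hzZ r
    _ ≤ lam ^ t * (M / (1 - lam)) :=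
        mul_le_mul_of_nonneg_left hZM (by positivity)
    _ = lam ^ t / (1 - lam) * M := by ring
end
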